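/- arXiv:1208.2091 — 4 statements merged into one kernel-verified Lean document; each statement's English description precedes it below -/
import Mathlib

section
/- Let u₁, ..., u_m be contracting similarities of ℝ^d and suppose there is a finite collection of proper affine subspaces L₁, ..., L_k of ℝ^d which is invariant (as a collection) under each u_i, with ⋂_{i=1}^k L_i = ∅. Then there exists N < k with ⋂_{i=1}^N L_i ≠ ∅ and ⋂_{i=1}^{N+1} L_i = ∅, and this leads to a contradiction: such an invariant collection with empty total intersection cannot exist, since u₁^{k!} fixes each L_i and hence preserves the positive distance d(⋂_{i=1}^N L_i, L_{N+1}) > 0, contradicting that u₁^{k!} is a strict contraction. -/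
/-!
A contracting similarity `f` is injective, hence so is `S ↦ f '' S`; an injective map sending a
finite collection of sets into itself permutes it, so `f^[p] '' L j = L j` for some `p > 0`.
Starting from any point of `L j`, the iterates of `f^[p]` stay in the closed set `L j` and
converge to the fixed point of `f`, which therefore lies in every `L j`.
-/

open Function Set Filter

theorem Function.Injective.mem_periodicPts_of_mapsTo {α : Type*} {f : α → α} (hf : Injective f)
    {s : Set α} (hs : s.Finite) (hmaps : MapsTo f s s) {x : α} (hx : x ∈ s) :
    x ∈ periodicPts f := by
  obtain ⟨m, n, hmn, heq⟩ :=
    Finite.exists_lt_map_eq_of_forall_mem (f := (f^[·] x)) (fun n ↦ hmaps.iterate n hx) hs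
  exact mk_mem_periodicPts (by lia) (iterate_cancel hf heq.symm)

theorem injective_of_dist_eq_mul {α : Type*} [MetricSpace α] {f : α → α} {r : ℝ} (hr : 0 < r)
    (hf : ∀ x y, dist (f x) (f y) = r * dist x y) : Injective f := by
  intro x y hxy
  simpa [hxy, hr.ne'] using hf x y

theorem ContractingWith.of_dist_eq_mul {α : Type*} [MetricSpace α] {f : α → α} {r : ℝ}
    (hr0 : 0 ≤ r) (hr1 : r < 1) (hf : ∀ x y, dist (f x) (f y) = r * dist x y) :
    ContractingWith ⟨r, hr0⟩ f :=
  ⟨hr1, LipschitzWith.of_dist_le_mul fun x y ↦ (hf x y).le⟩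

theorem ContractingWith.fixedPoint_mem_of_mem_periodicPts_image {α : Type*} [MetricSpace α]
    [Nonempty α] [CompleteSpace α] {K : NNReal} {f : α → α} (hf : ContractingWith K f)
    {s : Set α} (hs : IsClosed s) (hne : s.Nonempty) (hper : s ∈ periodicPts (image f)) :
    fixedPoint f hf ∈ s := by
  obtain ⟨p, hp, hfix⟩ := hper
  obtain ⟨y, hy⟩ := hne
  have hmaps : MapsTo f^[p] s s := fun x hx ↦ by
    rw [← hfix.eq, ← image_iterate_eq]
    exact mem_image_of_mem _ hx
  have hlim : Tendsto (fun n ↦ f^[p * n] y) atTop (nhds (fixedPoint f hf)) :=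
    (hf.tendsto_iterate_fixedPoint y).comp (tendsto_id.const_mul_atTop' hp)
  refine hs.mem_of_tendsto hlim (Eventually.of_forall fun n ↦ ?_)
  rw [iterate_mul]
  exact hmaps.iterate n hy

theorem stmt2_general (d k m : ℕ) (hm : 1 ≤ m)
    (u : Fin m → EuclideanSpace ℝ (Fin d) → EuclideanSpace ℝ (Fin d))
    (hu : ∀ i, ∃ r : ℝ, 0 < r ∧ r < 1 ∧ ∀ x y, dist (u i x) (u i y) = r * dist x y)
    (L : Fin k → AffineSubspace ℝ (EuclideanSpace ℝ (Fin d)))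
    (hne : ∀ j, (L j : Set (EuclideanSpace ℝ (Fin d))).Nonempty)
    (hinv : ∀ i j, ∃ j', u i '' (L j : Set (EuclideanSpace ℝ (Fin d))) = (L j' : Set (EuclideanSpace ℝ (Fin d)))) :
    (⋂ j, (L j : Set (EuclideanSpace ℝ (Fin d)))).Nonempty := by
  let i₀ : Fin m := ⟨0, hm⟩
  obtain ⟨r, hr0, hr1, hdist⟩ := hu i₀
  have hf := ContractingWith.of_dist_eq_mul hr0.le hr1 hdist
  have hinj := (injective_of_dist_eq_mul hr0 hdist).image_injective
  have hmaps : MapsTo (image (u i₀)) (range fun j ↦ (L j : Set _)) (range fun j ↦ (L j : Set _)) := by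
    rintro _ ⟨j, rfl⟩
    obtain ⟨j', hj'⟩ := hinv i₀ j
    exact ⟨j', hj'.symm⟩
  refine ⟨hf.fixedPoint, mem_iInter.2 fun j ↦ ?_⟩
  exact hf.fixedPoint_mem_of_mem_periodicPts_image (L j).closed_of_finiteDimensional (hne j)
    (hinj.mem_periodicPts_of_mapsTo (finite_range _) hmaps (mem_range_self j))

/-- If a finite collection of nonempty proper affine subspaces of ℝ^d is
invariant (as a collection) under each member of a family of contracting similarities,
then the total intersection of the collection is nonempty. -/
theorem stmt2 (d k m : ℕ) (hm : 1 ≤ m)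
    (u : Fin m → EuclideanSpace ℝ (Fin d) → EuclideanSpace ℝ (Fin d))
    (hu : ∀ i, ∃ r : ℝ, 0 < r ∧ r < 1 ∧ ∀ x y, dist (u i x) (u i y) = r * dist x y)
    (L : Fin k → AffineSubspace ℝ (EuclideanSpace ℝ (Fin d)))
    (hproper : ∀ j, L j ≠ ⊤)
    (hne : ∀ j, (L j : Set (EuclideanSpace ℝ (Fin d))).Nonempty)
    (hinv : ∀ i j, ∃ j', u i '' (L j : Set (EuclideanSpace ℝ (Fin d))) = (L j' : Set (EuclideanSpace ℝ (Fin d)))) :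
    (⋂ j, (L j : Set (EuclideanSpace ℝ (Fin d)))).Nonempty :=
  stmt2_general d k m hm u hu L hne hinv
end

section
/- Let M: ℝ^N → ℝ^M be a nonzero linear map with operator norm t = ‖M‖_op, and let v be a unit vector in ℝ^N with ‖Mv‖ = t. Let V ⊆ ℝ^M be the hyperplane through 0 perpendicular to Mv, and let W = M^{-1}(V) ⊆ ℝ^N. Then for any c > 0, the preimage M^{-1}(B(0, c)) of the closed ball of radius c around 0 is contained in the (c/t)-neighborhood of W. -/
open scoped RealInnerProductSpace

/-!
Moving `x` along `v` by `η = ⟪f v, f x⟫ / ‖f v‖²` lands in `W = f⁻¹' (f v)ᗮ`, and by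
Cauchy–Schwarz `|η| ‖v‖ ≤ ‖f x‖ ‖v‖ / ‖f v‖`, which is `‖f x‖ / t` for a unit `v`.
-/

section

variable {E F : Type*} [NormedAddCommGroup E] [InnerProductSpace ℝ E]
  [NormedAddCommGroup F] [InnerProductSpace ℝ F]

/-- When `f v = 0` the coefficient is the junk value `0 / 0 = 0` and the hyperplane is everything. -/
lemma sub_smul_mem_preimage_orthogonal (f : E →ₗ[ℝ] F) (v x : E) :
    x - (⟪f v, f x⟫ / ‖f v‖ ^ 2) • v ∈ f ⁻¹' {y | ⟪f v, y⟫ = 0} := by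
  rcases eq_or_ne (f v) 0 with hfv | hfv
  · simp [hfv]
  · have : ‖f v‖ ^ 2 ≠ 0 := by positivity
    simp only [Set.mem_preimage, Set.mem_ofPred_eq, map_sub, map_smul, inner_sub_right,
      inner_smul_right, real_inner_self_eq_norm_sq]
    field_simp
    ring

lemma infDist_preimage_orthogonal_le (f : E →ₗ[ℝ] F) (v x : E) :
    Metric.infDist x (f ⁻¹' {y | ⟪f v, y⟫ = 0}) ≤ ‖f x‖ * ‖v‖ / ‖f v‖ :=
  calc Metric.infDist x (f ⁻¹' {y | ⟪f v, y⟫ = 0})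
      ≤ dist x (x - (⟪f v, f x⟫ / ‖f v‖ ^ 2) • v) :=
        Metric.infDist_le_dist_of_mem (sub_smul_mem_preimage_orthogonal f v x)
    _ = |⟪f v, f x⟫| / ‖f v‖ ^ 2 * ‖v‖ := by
        rw [dist_self_sub_right, norm_smul, Real.norm_eq_abs, abs_div,
          abs_of_nonneg (sq_nonneg ‖f v‖)]
    _ ≤ ‖f v‖ * ‖f x‖ / ‖f v‖ ^ 2 * ‖v‖ := by gcongr; exact abs_real_inner_le_norm _ _
    _ = ‖f x‖ * ‖v‖ / ‖f v‖ := by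
        rcases eq_or_ne ‖f v‖ 0 with h | h
        · simp [h]
        · field_simp

end

theorem stmt6_general (N M : ℕ)
    (f : EuclideanSpace ℝ (Fin N) →L[ℝ] EuclideanSpace ℝ (Fin M))
    (t : ℝ)
    (v : EuclideanSpace ℝ (Fin N)) (hv : ‖v‖ = 1) (hfv : ‖f v‖ = t)
    (V : Set (EuclideanSpace ℝ (Fin M))) (hV : V = {y | ⟪f v, y⟫ = 0})
    (W : Set (EuclideanSpace ℝ (Fin N))) (hW : W = f ⁻¹' V)
    (c : ℝ) :
    f ⁻¹' (Metric.closedBall 0 c) ⊆ {x | Metric.infDist x W ≤ c / t} := by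
  subst hW hV
  intro x hx
  rw [Set.mem_preimage, mem_closedBall_zero_iff] at hx
  calc Metric.infDist x (f ⁻¹' {y | ⟪f v, y⟫ = 0})
      ≤ ‖f x‖ * ‖v‖ / ‖f v‖ := infDist_preimage_orthogonal_le f.toLinearMap v x
    _ ≤ c / t := by rw [hv, mul_one, hfv]; gcongr; exact hfv ▸ norm_nonneg _

/-- For a nonzero linear map M : ℝ^N → ℝ^M with operator norm t attained
at a unit vector v, with V the hyperplane through 0 perpendicular to Mv and W = M⁻¹(V),
the preimage of the closed ball B(0,c) is contained in the (c/t)-neighborhood of W. -/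
theorem stmt6 (N M : ℕ)
    (f : EuclideanSpace ℝ (Fin N) →L[ℝ] EuclideanSpace ℝ (Fin M))
    (hf : f ≠ 0) (t : ℝ) (ht : t = ‖f‖)
    (v : EuclideanSpace ℝ (Fin N)) (hv : ‖v‖ = 1) (hfv : ‖f v‖ = t)
    (V : Set (EuclideanSpace ℝ (Fin M))) (hV : V = {y | ⟪f v, y⟫ = 0})
    (W : Set (EuclideanSpace ℝ (Fin N))) (hW : W = f ⁻¹' V)
    (c : ℝ) (hc : 0 < c) :
    f ⁻¹' (Metric.closedBall 0 c) ⊆ {x | Metric.infDist x W ≤ c / t} :=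
  stmt6_general N M f t v hv hfv V hV W hW c
end

section
/- In the setting of the previous minor-determinant construction: the second derivative satisfies |∇_{A''}∇_{A'} D_{(I,J)}(A)| ≤ v² · M_{v−2}(A) · ‖A'‖ · ‖A''‖, where M_{v−2}(A) is the maximum absolute value of (v−2)×(v−2) minors D_{(I'',J'')}(A), with the convention M_{−1}(A) = M_0(A) = 1. -/
/-- The augmented column vector B_j(A) ∈ ℝ^{M+N}: first M coordinates the j-th column of A,
last N coordinates the j-th standard basis vector of ℝ^N. -/
noncomputable def Bvec {M N : ℕ} (A : Matrix (Fin M) (Fin N) ℝ) (j : Fin N) :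
    EuclideanSpace ℝ (Fin (M + N)) :=
  WithLp.toLp 2 (fun l => Fin.addCases (fun i : Fin M => A i j) (fun i : Fin N => if i = j then 1 else 0) l)

/-- The v×v minor determinant D_{(I,J)}(A) = det (B_{i_k}(A) · Y_{j_ℓ}), where the index
sets I, J of size v are given by embeddings e, f : Fin v ↪ Fin N. -/
noncomputable def minorD {M N : ℕ} (v : ℕ) (Y : Fin N → EuclideanSpace ℝ (Fin (M + N)))
    (e f : Fin v ↪ Fin N) (A : Matrix (Fin M) (Fin N) ℝ) : ℝ :=
  Matrix.det (Matrix.of fun k l : Fin v => (inner ℝ (Bvec A (e k)) (Y (f l)) : ℝ))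

/-- M_v(A): the largest absolute value of a v×v minor (with M_0(A)=1, and junk value 0 if v>N). -/
noncomputable def minorMax {M N : ℕ} (v : ℕ) (Y : Fin N → EuclideanSpace ℝ (Fin (M + N)))
    (A : Matrix (Fin M) (Fin N) ℝ) : ℝ :=
  ⨆ ef : (Fin v ↪ Fin N) × (Fin v ↪ Fin N), |minorD v Y ef.1 ef.2 A|

/-- Frobenius (Euclidean) norm of a matrix. -/
noncomputable def frobNorm {M N : ℕ} (A : Matrix (Fin M) (Fin N) ℝ) : ℝ :=
  Real.sqrt (∑ i, ∑ j, (A i j) ^ 2)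

/-! Along the plane `A + τ A' + s A''` the minor is `det (G + τ P + s Q)`, where `G` is the matrix
`(B_{e k}(A) · Y_{f l})` and `P`, `Q` are built in the same way from the columns of `A'`, `A''`
padded with zeros. Since the determinant is multilinear in the rows, the mixed second derivative
is the sum, over ordered pairs of distinct rows `k ≠ k'`, of `det G` with row `k` replaced by
`P k` and row `k'` by `Q k'`. Laplace expansion along these two rows bounds such a term by
`(∑ l, |P k l|) (∑ l, |Q k' l|) M_{v-2}(A)`. Finally Cauchy–Schwarz and Bessel's inequality for
the orthonormal family `Y` give `∑ k, ∑ l, |P k l| ≤ v ‖A'‖_F`, and likewise for `Q`. -/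

open Matrix Finset

namespace Matrix

theorem updateRow_add_smul {m n α : Type*} [DecidableEq m] [Semiring α] (X Y : Matrix m n α)
    (s : α) (k : m) (p : n → α) :
    (X + s • Y).updateRow k p = X.updateRow k p + s • Y.updateRow k 0 := by
  ext i j
  by_cases h : i = k <;> simp [updateRow_apply, h]

theorem submatrix_updateRow_of_injective {m n o p α : Type*} [DecidableEq m] [DecidableEq o]
    (A : Matrix m n α) {r : o → m} (hr : Function.Injective r) (c : p → n) (i : o)
    (b : n → α) :
    (A.updateRow (r i) b).submatrix r c = (A.submatrix r c).updateRow i (b ∘ c) := by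
  ext i' j
  by_cases h : i' = i <;> simp [updateRow_apply, hr.eq_iff, h]

section Derivative

variable {𝕜 : Type*} [NontriviallyNormedField 𝕜] {ι : Type*} [Fintype ι] [DecidableEq ι]

variable (𝕜 ι) in
noncomputable def detRowContinuousMultilinear :
    ContinuousMultilinearMap 𝕜 (fun _ : ι => ι → 𝕜) 𝕜 :=
  { (detRowAlternating : (ι → 𝕜) [⋀^ι]→ₗ[𝕜] 𝕜).toMultilinearMap with
    cont := continuous_id.matrix_det }

theorem hasDerivAt_det_add_smul (X Y : Matrix ι ι 𝕜) :
    HasDerivAt (fun t : 𝕜 => det (X + t • Y)) (∑ k, det (X.updateRow k (Y k))) 0 := by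
  have hline : HasDerivAt (F := ι → ι → 𝕜) (fun t : 𝕜 => X + t • Y) Y 0 := by
    have h := ((hasDerivAt_id (0 : 𝕜)).smul_const (of.symm Y)).const_add (of.symm X)
    rwa [one_smul] at h
  have h := ((detRowContinuousMultilinear 𝕜 ι).hasFDerivAt (X + (0 : 𝕜) • Y)).comp_hasDerivAt
    0 hline
  refine h.congr_deriv ?_
  rw [zero_smul, add_zero]
  exact ContinuousMultilinearMap.linearDeriv_apply _ _ _

theorem deriv_deriv_det_add_smul_add_smul (G P Q : Matrix ι ι 𝕜) :
    deriv (fun s : 𝕜 => deriv (fun τ : 𝕜 => det (G + τ • P + s • Q)) 0) 0 =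
      ∑ k, ∑ k' ∈ univ.erase k, det ((G.updateRow k (P k)).updateRow k' (Q k')) := by
  have hinner (s : 𝕜) : deriv (fun τ : 𝕜 => det (G + τ • P + s • Q)) 0 =
      ∑ k, det (G.updateRow k (P k) + s • Q.updateRow k 0) := by
    simp_rw [add_right_comm G, ← updateRow_add_smul]
    exact (hasDerivAt_det_add_smul _ P).deriv
  simp_rw [hinner]
  refine (HasDerivAt.fun_sum fun k _ => hasDerivAt_det_add_smul _ _).deriv.trans ?_
  refine sum_congr rfl fun k _ => ?_
  rw [← add_sum_erase _ _ (mem_univ k), updateRow_idem, det_eq_zero_of_row_eq_zero k (by simp),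
    zero_add]
  exact sum_congr rfl fun k' hk' => by rw [updateRow_ne (ne_of_mem_erase hk')]

end Derivative

section Bounds

variable {R : Type*} [CommRing R] [LinearOrder R] [IsStrictOrderedRing R]

theorem abs_det_updateRow_le {n : ℕ} (A : Matrix (Fin (n + 1)) (Fin (n + 1)) R)
    (k : Fin (n + 1)) (p : Fin (n + 1) → R) :
    |det (A.updateRow k p)| ≤ ∑ l, |p l| * |det (A.submatrix k.succAbove l.succAbove)| := by
  rw [det_succ_row _ k]
  refine (abs_sum_le_sum_abs _ _).trans_eq (sum_congr rfl fun l _ => ?_)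
  simp [abs_mul]

theorem abs_det_updateRow_updateRow_le {n : ℕ} (G : Matrix (Fin n) (Fin n) R) {m : R}
    (hm : ∀ r c : Fin (n - 2) ↪ Fin n, |det (G.submatrix r c)| ≤ m) {k k' : Fin n}
    (hk : k ≠ k') (p q : Fin n → R) :
    |det ((G.updateRow k p).updateRow k' q)| ≤ (∑ l, |p l|) * (∑ l, |q l|) * m := by
  obtain ⟨w, rfl⟩ : ∃ w, n = w + 2 := ⟨n - 2, by have := Fin.val_ne_of_ne hk; omega⟩
  have hm0 : 0 ≤ m :=
    (abs_nonneg _).trans (hm (Fin.castLEEmb (by omega)) (Fin.castLEEmb (by omega)))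
  obtain ⟨k₀, rfl⟩ := Fin.exists_succAbove_eq hk
  have hminor (l' : Fin (w + 2)) :
      |det ((G.updateRow (k'.succAbove k₀) p).submatrix k'.succAbove l'.succAbove)| ≤
        (∑ l, |p l|) * m := by
    rw [submatrix_updateRow_of_injective _ Fin.succAbove_right_injective]
    refine (abs_det_updateRow_le _ _ _).trans ?_
    calc ∑ l, |p (l'.succAbove l)| *
          |det ((G.submatrix k'.succAbove l'.succAbove).submatrix k₀.succAbove l.succAbove)|
        ≤ ∑ l, |p (l'.succAbove l)| * m := by
          gcongr with l
          rw [submatrix_submatrix]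
          exact hm ((Fin.succAboveEmb k₀).trans (Fin.succAboveEmb k'))
            ((Fin.succAboveEmb l).trans (Fin.succAboveEmb l'))
      _ ≤ (∑ l, |p l|) * m := by
          rw [← sum_mul, Fin.sum_univ_succAbove _ l']
          gcongr
          exact le_add_of_nonneg_left (abs_nonneg _)
  calc |det ((G.updateRow (k'.succAbove k₀) p).updateRow k' q)|
      ≤ ∑ l', |q l'| * ((∑ l, |p l|) * m) :=
        (abs_det_updateRow_le _ _ _).trans (by gcongr with l'; exact hminor l')
    _ = (∑ l, |p l|) * (∑ l, |q l|) * m := by rw [← sum_mul]; ring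

theorem abs_sum_det_updateRow_updateRow_le {n : ℕ} (G P Q : Matrix (Fin n) (Fin n) R) {m : R}
    (hm : ∀ r c : Fin (n - 2) ↪ Fin n, |det (G.submatrix r c)| ≤ m) :
    |∑ k, ∑ k' ∈ univ.erase k, det ((G.updateRow k (P k)).updateRow k' (Q k'))| ≤
      (∑ k, ∑ l, |P k l|) * (∑ k, ∑ l, |Q k l|) * m := by
  have hm0 : 0 ≤ m :=
    (abs_nonneg _).trans (hm (Fin.castLEEmb (n.sub_le 2)) (Fin.castLEEmb (n.sub_le 2)))
  calc |∑ k, ∑ k' ∈ univ.erase k, det ((G.updateRow k (P k)).updateRow k' (Q k'))|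
      ≤ ∑ k, ∑ k' ∈ univ.erase k, (∑ l, |P k l|) * (∑ l, |Q k' l|) * m := by
        refine (abs_sum_le_sum_abs _ _).trans (sum_le_sum fun k _ => ?_)
        refine (abs_sum_le_sum_abs _ _).trans (sum_le_sum fun k' hk' => ?_)
        exact abs_det_updateRow_updateRow_le G hm (ne_of_mem_erase hk').symm _ _
    _ ≤ ∑ k, ∑ k', (∑ l, |P k l|) * (∑ l, |Q k' l|) * m := by
        gcongr with k
        exact erase_subset _ _
    _ = (∑ k, ∑ l, |P k l|) * (∑ k, ∑ l, |Q k l|) * m := by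
        rw [sum_mul_sum, sum_mul]
        simp_rw [sum_mul]

end Bounds

theorem sum_sum_abs_le_mul_sqrt {n : ℕ} (X : Matrix (Fin n) (Fin n) ℝ) :
    ∑ k, ∑ l, |X k l| ≤ n * √(∑ k, ∑ l, X k l ^ 2) := by
  have h := sq_sum_le_card_mul_sum_sq (s := univ ×ˢ univ)
    (f := fun kl : Fin n × Fin n => |X kl.1 kl.2|)
  simp only [sum_product, card_product, card_univ, Fintype.card_fin, sq_abs, Nat.cast_mul] at h
  calc ∑ k, ∑ l, |X k l| ≤ √((n : ℝ) ^ 2 * ∑ k, ∑ l, X k l ^ 2) :=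
        (le_abs_self _).trans (Real.abs_le_sqrt (by rwa [sq (n : ℝ)]))
    _ = n * √(∑ k, ∑ l, X k l ^ 2) := by
        rw [Real.sqrt_mul (by positivity), Real.sqrt_sq n.cast_nonneg]

end Matrix

section InnerMatrix

variable {E : Type*} [NormedAddCommGroup E] [InnerProductSpace ℝ E] {κ ι : Type*}

def innerMatrix (u : κ → E) (w : ι → E) : Matrix κ ι ℝ :=
  of fun k l => inner ℝ (u k) (w l)

theorem sum_sum_innerMatrix_sq_le [Fintype κ] [Fintype ι] (u : κ → E) {w : ι → E}
    (hw : Orthonormal ℝ w) : ∑ k, ∑ l, innerMatrix u w k l ^ 2 ≤ ∑ k, ‖u k‖ ^ 2 := by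
  refine sum_le_sum fun k _ => ?_
  refine le_of_eq_of_le (sum_congr rfl fun l _ => ?_) (hw.sum_inner_products_le (u k))
  rw [Real.norm_eq_abs, sq_abs, real_inner_comm]
  rfl

end InnerMatrix

section Minors

variable {M N : ℕ}

noncomputable def padCol (B : Matrix (Fin M) (Fin N) ℝ) (j : Fin N) :
    EuclideanSpace ℝ (Fin (M + N)) :=
  WithLp.toLp 2 (fun l => Fin.addCases (fun i : Fin M => B i j) (fun _ : Fin N => 0) l)

theorem Bvec_add_smul_add_smul (A B C : Matrix (Fin M) (Fin N) ℝ) (τ s : ℝ) (j : Fin N) :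
    Bvec (A + τ • B + s • C) j = Bvec A j + τ • padCol B j + s • padCol C j := by
  ext l
  refine Fin.addCases (fun i => ?_) (fun i => ?_) l <;> simp [Bvec, padCol]

theorem minorD_add_smul_add_smul {v : ℕ} (Y : Fin N → EuclideanSpace ℝ (Fin (M + N)))
    (e f : Fin v ↪ Fin N) (A B C : Matrix (Fin M) (Fin N) ℝ) (τ s : ℝ) :
    minorD v Y e f (A + τ • B + s • C) =
      det (innerMatrix (Bvec A ∘ e) (Y ∘ f) + τ • innerMatrix (padCol B ∘ e) (Y ∘ f) +
        s • innerMatrix (padCol C ∘ e) (Y ∘ f)) := by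
  unfold minorD
  congr 1
  ext k l
  simp [innerMatrix, Bvec_add_smul_add_smul, inner_add_left, real_inner_smul_left]

theorem norm_padCol_sq (B : Matrix (Fin M) (Fin N) ℝ) (j : Fin N) :
    ‖padCol B j‖ ^ 2 = ∑ i, B i j ^ 2 := by
  simp [EuclideanSpace.norm_sq_eq, padCol, Fin.sum_univ_add]

theorem sum_sum_abs_innerMatrix_padCol_le {v : ℕ} {Y : Fin N → EuclideanSpace ℝ (Fin (M + N))}
    (hY : Orthonormal ℝ Y) (e f : Fin v ↪ Fin N) (B : Matrix (Fin M) (Fin N) ℝ) :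
    ∑ k, ∑ l, |innerMatrix (padCol B ∘ e) (Y ∘ f) k l| ≤ v * frobNorm B := by
  refine (sum_sum_abs_le_mul_sqrt _).trans
    (mul_le_mul_of_nonneg_left (Real.sqrt_le_sqrt ?_) v.cast_nonneg)
  calc ∑ k, ∑ l, innerMatrix (padCol B ∘ e) (Y ∘ f) k l ^ 2
      ≤ ∑ k, ‖padCol B (e k)‖ ^ 2 := sum_sum_innerMatrix_sq_le _ (hY.comp f f.injective)
    _ ≤ ∑ j, ‖padCol B j‖ ^ 2 :=
      (sum_map univ e fun j => ‖padCol B j‖ ^ 2).symm.trans_le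
        (sum_le_univ_sum_of_nonneg fun _ => by positivity)
    _ = ∑ i, ∑ j, B i j ^ 2 := by simp_rw [norm_padCol_sq]; exact sum_comm

theorem abs_minorD_le_minorMax (v : ℕ) (Y : Fin N → EuclideanSpace ℝ (Fin (M + N)))
    (e f : Fin v ↪ Fin N) (A : Matrix (Fin M) (Fin N) ℝ) :
    |minorD v Y e f A| ≤ minorMax v Y A :=
  le_ciSup (f := fun ef : (Fin v ↪ Fin N) × (Fin v ↪ Fin N) => |minorD v Y ef.1 ef.2 A|)
    (Set.finite_range _).bddAbove (e, f)

theorem minorMax_nonneg {v : ℕ} (hvN : v ≤ N) (Y : Fin N → EuclideanSpace ℝ (Fin (M + N)))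
    (A : Matrix (Fin M) (Fin N) ℝ) : 0 ≤ minorMax v Y A :=
  (abs_nonneg _).trans (abs_minorD_le_minorMax v Y (Fin.castLEEmb hvN) (Fin.castLEEmb hvN) A)

end Minors

theorem stmt12_general (M N : ℕ)
    (Y : Fin N → EuclideanSpace ℝ (Fin (M + N))) (hY : Orthonormal ℝ Y) (v : ℕ)
    (e f : Fin v ↪ Fin N) (A A' A'' : Matrix (Fin M) (Fin N) ℝ) :
    |deriv (fun s : ℝ =>
        deriv (fun τ : ℝ => minorD v Y e f (A + τ • A' + s • A'')) 0) 0| ≤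
      (v : ℝ) ^ 2 * minorMax (v - 2) Y A * frobNorm A' * frobNorm A'' := by
  simp_rw [minorD_add_smul_add_smul, deriv_deriv_det_add_smul_add_smul]
  have hminor (r c : Fin (v - 2) ↪ Fin v) :
      |det ((innerMatrix (Bvec A ∘ e) (Y ∘ f)).submatrix r c)| ≤ minorMax (v - 2) Y A :=
    abs_minorD_le_minorMax (v - 2) Y (r.trans e) (c.trans f) A
  have hm0 := minorMax_nonneg ((v.sub_le 2).trans (Fin.le_of_embedding e)) Y A
  calc _ ≤ (∑ k, ∑ l, |innerMatrix (padCol A' ∘ e) (Y ∘ f) k l|) *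
        (∑ k, ∑ l, |innerMatrix (padCol A'' ∘ e) (Y ∘ f) k l|) * minorMax (v - 2) Y A :=
        abs_sum_det_updateRow_updateRow_le _ _ _ hminor
    _ ≤ (v * frobNorm A') * (v * frobNorm A'') * minorMax (v - 2) Y A := by
        gcongr
        · exact mul_nonneg v.cast_nonneg (Real.sqrt_nonneg _)
        · exact sum_sum_abs_innerMatrix_padCol_le hY e f A'
        · exact sum_sum_abs_innerMatrix_padCol_le hY e f A''
    _ = (v : ℝ) ^ 2 * minorMax (v - 2) Y A * frobNorm A' * frobNorm A'' := by ring

/-- The second directional derivative of the minor determinant satisfies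
|∇_{A''}∇_{A'} D_{(I,J)}(A)| ≤ v²·M_{v−2}(A)·‖A'‖_F·‖A''‖_F (with M_{−1} = M_0 = 1,
realized here via truncated subtraction v − 2 in ℕ). -/
theorem stmt12 (M N : ℕ) (hM : 1 ≤ M) (hN : 1 ≤ N)
    (Y : Fin N → EuclideanSpace ℝ (Fin (M + N))) (hY : Orthonormal ℝ Y)
    (v : ℕ) (hv : 1 ≤ v) (hvN : v ≤ N)
    (e f : Fin v ↪ Fin N) (A A' A'' : Matrix (Fin M) (Fin N) ℝ) :
    |deriv (fun s : ℝ =>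
        deriv (fun τ : ℝ => minorD v Y e f (A + τ • A' + s • A'')) 0) 0| ≤
      (v : ℝ) ^ 2 * minorMax (v - 2) Y A * frobNorm A' * frobNorm A'' :=
  stmt12_general M N Y hY v e f A A' A''
end

section
/- Let N ≥ 1, let Y₁,...,Y_N be orthonormal vectors in ℝ^{M+N} spanning a subspace S of dimension N, and suppose Y ∈ S satisfies ‖Y‖ ≥ c₁ and, writing Y = ∑_v t_v Y_v, the N numbers s_u = ∑_v t_v m_{uv} (u = 1,...,N) all satisfy |s_u| < c₂, where m_{uv} = B_u · Y_v for vectors B₁,...,B_N ∈ ℝ^{M+N} and D = det(m_{uv}) ≠ 0. Then |D| ≤ N√N · (c₂/c₁) · max_{u,v}|D_{uv}|, where D_{uv} are the cofactors of the matrix (m_{uv}). -/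
/-!
Measure the coefficient vector `t` in the sup norm. Orthonormality gives
`c₁ ≤ ‖Y‖ = (∑ t_v²)^{1/2} ≤ √N ‖t‖`, while Cramer's rule `adj(m) (m t) = D t`,
with the entries of the adjugate bounded by the largest cofactor and those of `m t`
by `c₂`, gives `|D| ‖t‖ ≤ N c₂ max |D_{uv}|`. Multiplying the two bounds
eliminates `‖t‖`.
-/

open Finset Matrix

theorem Orthonormal.norm_sum_smul_sq {ι E : Type*} [Fintype ι] [NormedAddCommGroup E]
    [InnerProductSpace ℝ E] {Y : ι → E} (hY : Orthonormal ℝ Y) (t : ι → ℝ) :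
    ‖∑ v, t v • Y v‖ ^ 2 = ∑ v, t v ^ 2 := by
  rw [← real_inner_self_eq_norm_sq]
  simpa [pow_two] using hY.inner_sum t t univ

theorem Orthonormal.norm_sum_smul_le {ι E : Type*} [Fintype ι] [NormedAddCommGroup E]
    [InnerProductSpace ℝ E] {Y : ι → E} (hY : Orthonormal ℝ Y) (t : ι → ℝ) :
    ‖∑ v, t v • Y v‖ ≤ √(Fintype.card ι) * ‖t‖ := by
  calc ‖∑ v, t v • Y v‖
    _ = √(∑ v, t v ^ 2) := by rw [← hY.norm_sum_smul_sq, Real.sqrt_sq (norm_nonneg _)]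
    _ ≤ √(∑ _v : ι, ‖t‖ ^ 2) :=
      Real.sqrt_le_sqrt <| sum_le_sum fun v _ => by
        simpa only [Real.norm_eq_abs, sq_abs] using
          pow_le_pow_left₀ (norm_nonneg _) (norm_le_pi_norm t v) 2
    _ = √(Fintype.card ι) * ‖t‖ := by
      rw [sum_const, card_univ, nsmul_eq_mul, Real.sqrt_mul (Nat.cast_nonneg _),
        Real.sqrt_sq (norm_nonneg _)]

theorem Matrix.norm_mulVec_le_of_abs_le {n : Type*} [Fintype n] {A : Matrix n n ℝ}
    {K : ℝ} (hA : ∀ i j, |A i j| ≤ K) (x : n → ℝ) :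
    ‖A *ᵥ x‖ ≤ Fintype.card n * K * ‖x‖ := by
  cases isEmpty_or_nonempty n
  · simp [Subsingleton.elim x 0]
  refine (pi_norm_le_iff_of_nonempty _).2 fun i => ?_
  calc ‖(A *ᵥ x) i‖ ≤ ∑ j, |A i j| * ‖x j‖ := by
        simpa only [mulVec, dotProduct, Real.norm_eq_abs, abs_mul] using
          abs_sum_le_sum_abs (fun j => A i j * x j) univ
    _ ≤ ∑ _j : n, K * ‖x‖ := by
        have hK : 0 ≤ K := (abs_nonneg _).trans (hA i i)
        gcongr with j
        exacts [hA i j, norm_le_pi_norm x j]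
    _ = Fintype.card n * K * ‖x‖ := by rw [sum_const, card_univ, nsmul_eq_mul, mul_assoc]

theorem Matrix.adjugate_mulVec_mulVec {n α : Type*} [Fintype n] [DecidableEq n] [CommRing α]
    (A : Matrix n n α) (x : n → α) : A.adjugate *ᵥ (A *ᵥ x) = A.det • x := by
  rw [mulVec_mulVec, adjugate_mul, smul_mulVec, one_mulVec]

theorem Matrix.abs_det_mul_norm_le {n : Type*} [Fintype n] [DecidableEq n] {A : Matrix n n ℝ}
    {K : ℝ} (hA : ∀ i j, |A.adjugate i j| ≤ K) (x : n → ℝ) :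
    |A.det| * ‖x‖ ≤ Fintype.card n * K * ‖A *ᵥ x‖ := by
  rw [← Real.norm_eq_abs, ← norm_smul, ← adjugate_mulVec_mulVec]
  exact norm_mulVec_le_of_abs_le hA _

theorem stmt17_general (M n : ℕ)
    (Y : Fin (n + 1) → EuclideanSpace ℝ (Fin (M + (n + 1)))) (hY : Orthonormal ℝ Y)
    (m : Matrix (Fin (n + 1)) (Fin (n + 1)) ℝ)
    (D : ℝ) (hD : D = m.det)
    (t : Fin (n + 1) → ℝ) (Yvec : EuclideanSpace ℝ (Fin (M + (n + 1))))
    (hYvec : Yvec = ∑ v, t v • Y v)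
    (c₁ c₂ : ℝ) (hc₁ : 0 < c₁) (hc₂ : 0 < c₂)
    (hnorm : c₁ ≤ ‖Yvec‖)
    (hs : ∀ u, |∑ v, t v * m u v| < c₂)
    (cof : Fin (n + 1) → Fin (n + 1) → ℝ)
    (hcof : ∀ u v, cof u v =
      (-1 : ℝ) ^ ((u : ℕ) + (v : ℕ)) * (m.submatrix u.succAbove v.succAbove).det) :
    |D| ≤ (n + 1 : ℝ) * Real.sqrt (n + 1) * (c₂ / c₁) *
      Finset.univ.sup' Finset.univ_nonempty
        (fun p : Fin (n + 1) × Fin (n + 1) => |cof p.1 p.2|) := by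
  set K := univ.sup' univ_nonempty fun p : Fin (n + 1) × Fin (n + 1) => |cof p.1 p.2|
  have hadj : ∀ v u, |m.adjugate v u| ≤ K := fun v u => by
    rw [adjugate_fin_succ_eq_det_submatrix, ← hcof]
    exact le_sup' (fun p : Fin (n + 1) × Fin (n + 1) => |cof p.1 p.2|) (mem_univ (u, v))
  have hK : 0 ≤ K := (abs_nonneg _).trans (hadj 0 0)
  have hmt : ‖m *ᵥ t‖ ≤ c₂ :=
    ((pi_norm_lt_iff hc₂).2 fun u => by simpa [mulVec, dotProduct, mul_comm] using hs u).le
  have ht : c₁ ≤ √(n + 1) * ‖t‖ := by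
    have h := hY.norm_sum_smul_le t
    rw [← hYvec, Fintype.card_fin, Nat.cast_succ] at h
    exact hnorm.trans h
  have hDt : |D| * ‖t‖ ≤ (n + 1) * K * c₂ :=
    calc |D| * ‖t‖ ≤ Fintype.card (Fin (n + 1)) * K * ‖m *ᵥ t‖ :=
          hD ▸ m.abs_det_mul_norm_le hadj t
      _ ≤ (n + 1) * K * c₂ := by rw [Fintype.card_fin, Nat.cast_succ]; gcongr
  refine le_of_mul_le_mul_right ?_ hc₁
  calc |D| * c₁ ≤ |D| * (√(n + 1) * ‖t‖) := by gcongr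
    _ = √(n + 1) * (|D| * ‖t‖) := by ring
    _ ≤ √(n + 1) * ((n + 1) * K * c₂) := by gcongr
    _ = (n + 1) * √(n + 1) * (c₂ / c₁) * K * c₁ := by field_simp

/-- If Y₁,...,Y_N are orthonormal in ℝ^{M+N}, Y = ∑ t_v Y_v has ‖Y‖ ≥ c₁ > 0,
m_{uv} = B_u · Y_v has determinant D ≠ 0, and |∑_v t_v m_{uv}| < c₂ for every u, then
|D| ≤ N√N·(c₂/c₁)·max_{u,v}|D_{uv}|, where D_{uv} are the cofactors of (m_{uv}). -/
theorem stmt17 (M n : ℕ)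
    (Y : Fin (n + 1) → EuclideanSpace ℝ (Fin (M + (n + 1)))) (hY : Orthonormal ℝ Y)
    (B : Fin (n + 1) → EuclideanSpace ℝ (Fin (M + (n + 1))))
    (m : Matrix (Fin (n + 1)) (Fin (n + 1)) ℝ)
    (hm : ∀ u v, m u v = (inner ℝ (B u) (Y v) : ℝ))
    (D : ℝ) (hD : D = m.det) (hD0 : D ≠ 0)
    (t : Fin (n + 1) → ℝ) (Yvec : EuclideanSpace ℝ (Fin (M + (n + 1))))
    (hYvec : Yvec = ∑ v, t v • Y v)
    (c₁ c₂ : ℝ) (hc₁ : 0 < c₁) (hc₂ : 0 < c₂)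
    (hnorm : c₁ ≤ ‖Yvec‖)
    (hs : ∀ u, |∑ v, t v * m u v| < c₂)
    (cof : Fin (n + 1) → Fin (n + 1) → ℝ)
    (hcof : ∀ u v, cof u v =
      (-1 : ℝ) ^ ((u : ℕ) + (v : ℕ)) * (m.submatrix u.succAbove v.succAbove).det) :
    |D| ≤ (n + 1 : ℝ) * Real.sqrt (n + 1) * (c₂ / c₁) *
      Finset.univ.sup' Finset.univ_nonempty
        (fun p : Fin (n + 1) × Fin (n + 1) => |cof p.1 p.2|) :=
  stmt17_general M n Y hY m D hD t Yvec hYvec c₁ c₂ hc₁ hc₂ hnorm hs cof hcof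
end
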